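/- Let G be a group with finite symmetric generating set S, n ≥ 1, and suppose u is an order unit in I^{2n}[G] (with respect to the cone of sums of hermitian squares in ℝG). Then for every k ≥ 1 the diagonal matrix diag_k(u), with u in each diagonal entry, is an order unit in M_{k×k}(I^{2n}[G]) with respect to the cone of sums of hermitian squares in M_{k×k}(ℝG). -/

import Mathlib

open MonoidAlgebra

variable {G : Type} [Group G]

/-- The additive map on the real group ring induced by `g ↦ g⁻¹`. -/
noncomputable def mstarHom (G : Type) [Group G] :
    MonoidAlgebra ℝ G →+ MonoidAlgebra ℝ G :=
  { toFun := MonoidAlgebra.mapDomain Inv.inv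
    map_zero' := MonoidAlgebra.mapDomain_zero _
    map_add' := MonoidAlgebra.mapDomain_add _ }

lemma mstarHom_single (a : G) (r : ℝ) :
    mstarHom G (MonoidAlgebra.single a r) = MonoidAlgebra.single a⁻¹ r :=
  MonoidAlgebra.mapDomain_single

private lemma mstar_mul (f g : MonoidAlgebra ℝ G) :
    mstarHom G (f * g) = mstarHom G g * mstarHom G f := by
  induction f using MonoidAlgebra.induction_linear with
  | zero => simp
  | add a b ha hb => simp only [add_mul, map_add, ha, hb, mul_add]
  | single a r =>
    induction g using MonoidAlgebra.induction_linear with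
    | zero => simp
    | add c d hc hd => simp only [mul_add, map_add, hc, hd, add_mul]
    | single c s =>
      simp only [MonoidAlgebra.single_mul_single, mstarHom_single, mul_inv_rev,
        mul_comm]

/-- The star ring structure on `ℝG` whose involution is induced by `g ↦ g⁻¹`. -/
noncomputable instance grpStar : StarRing (MonoidAlgebra ℝ G) where
  star f := mstarHom G f
  star_involutive f := by
    show MonoidAlgebra.mapDomain _ (MonoidAlgebra.mapDomain _ f) = f
    have h : (Inv.inv ∘ Inv.inv : G → G) = id := by funext x; simp
    apply MonoidAlgebra.coeff_injective
    simp only [MonoidAlgebra.mapDomain, MonoidAlgebra.coeff_ofCoeff]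
    rw [← Finsupp.mapDomain_comp, h, Finsupp.mapDomain_id]
  star_add f g := map_add _ f g
  star_mul f g := mstar_mul f g

/-- The augmentation ideal `I[G]`, as an `ℝ`-subspace of `ℝG`: the kernel of the
augmentation homomorphism sending every group element to `1`. -/
noncomputable def Iaug (G : Type) [Group G] : Submodule ℝ (MonoidAlgebra ℝ G) :=
  LinearMap.ker ((MonoidAlgebra.lift ℝ ℝ G 1).toLinearMap)

/-- Sums of hermitian squares `∑ aᵢ* aᵢ` in a `*`-algebra. -/
noncomputable def SOS (A : Type*) [NonUnitalSemiring A] [StarRing A] : AddSubmonoid A :=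
  AddSubmonoid.closure {x | ∃ a, x = star a * a}

-- auxiliary lemmas

noncomputable instance : StarModule ℝ (MonoidAlgebra ℝ G) :=
  ⟨fun r a => by
    show MonoidAlgebra.mapDomain Inv.inv (r • a) = star r • MonoidAlgebra.mapDomain Inv.inv a
    rw [MonoidAlgebra.mapDomain_smul, star_trivial]⟩

lemma SOS_star_eq {A : Type*} [NonUnitalSemiring A] [StarRing A] {x : A} (hx : x ∈ SOS A) :
    star x = x := by
  induction hx using AddSubmonoid.closure_induction with
  | mem x hx => obtain ⟨a, rfl⟩ := hx; rw [star_mul, star_star]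
  | zero => exact star_zero _
  | add x y _ _ hx hy => rw [star_add, hx, hy]

lemma SOS_smul_mem {A : Type*} [NonUnitalSemiring A] [StarRing A] [Module ℝ A]
    [StarModule ℝ A] [SMulCommClass ℝ A A] [IsScalarTower ℝ A A]
    {r : ℝ} (hr : 0 ≤ r) {x : A} (hx : x ∈ SOS A) : r • x ∈ SOS A := by
  induction hx using AddSubmonoid.closure_induction with
  | mem x hx =>
    obtain ⟨a, rfl⟩ := hx
    have heq : star (Real.sqrt r • a) * (Real.sqrt r • a) = r • (star a * a) := by
      rw [star_smul, star_trivial (Real.sqrt r), smul_mul_smul_comm, Real.mul_self_sqrt hr]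
    exact AddSubmonoid.subset_closure ⟨Real.sqrt r • a, heq.symm⟩
  | zero => simpa using (SOS A).zero_mem
  | add x y _ _ hx hy => rw [smul_add]; exact add_mem hx hy

lemma aug_mstar (x : MonoidAlgebra ℝ G) :
    (MonoidAlgebra.lift ℝ ℝ G 1) (mstarHom G x) = (MonoidAlgebra.lift ℝ ℝ G 1) x := by
  induction x using MonoidAlgebra.induction_linear with
  | zero => simp
  | add a b ha hb => rw [map_add, map_add, map_add, ha, hb]
  | single a r =>
    rw [mstarHom_single]
    simp [MonoidAlgebra.lift_single]

lemma aug_star (x : MonoidAlgebra ℝ G) :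
    (MonoidAlgebra.lift ℝ ℝ G 1) (star x) = (MonoidAlgebra.lift ℝ ℝ G 1) x := by
  have hsx : (star x : MonoidAlgebra ℝ G) = mstarHom G x := rfl
  rw [hsx, aug_mstar]

lemma star_mem_Iaug {x : MonoidAlgebra ℝ G} (h : x ∈ Iaug G) : star x ∈ Iaug G := by
  simp only [Iaug, LinearMap.mem_ker, AlgHom.toLinearMap_apply] at h ⊢
  rw [aug_star]; exact h

lemma star_mem_Ipow {m : ℕ} : ∀ {x : MonoidAlgebra ℝ G},
    x ∈ (Iaug G) ^ m → star x ∈ (Iaug G) ^ m := by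
  induction m with
  | zero =>
    intro x hx
    rw [pow_zero] at hx ⊢
    obtain ⟨r, rfl⟩ := Submodule.mem_one.mp hx
    refine Submodule.mem_one.mpr ⟨r, ?_⟩
    rw [Algebra.algebraMap_eq_smul_one, star_smul, star_trivial, star_one]
  | succ m ih =>
    intro x hx
    rw [pow_succ] at hx
    rw [pow_succ']
    refine Submodule.mul_induction_on hx (fun a ha b hb => ?_) (fun a b ha hb => ?_)
    · rw [star_mul]; exact Submodule.mul_mem_mul (star_mem_Iaug hb) (ih ha)
    · rw [star_add]; exact add_mem ha hb

lemma star_stdBasisMatrix {k : ℕ} {A : Type*} [AddMonoid A] [StarAddMonoid A]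
    (i j : Fin k) (a : A) :
    star (Matrix.single i j a) = Matrix.single j i (star a) := by
  ext r s
  show star (Matrix.single i j a s r) = _
  simp only [Matrix.single, Matrix.of_apply]
  rw [apply_ite star, star_zero]
  simp [and_comm]

lemma diag_embed_SOS {k : ℕ} {A : Type*} [NonUnitalSemiring A] [StarRing A]
    (i : Fin k) {x : A} (hx : x ∈ SOS A) :
    Matrix.single i i x ∈ SOS (Matrix (Fin k) (Fin k) A) := by
  induction hx using AddSubmonoid.closure_induction with
  | mem x hx =>
    obtain ⟨a, rfl⟩ := hx
    refine AddSubmonoid.subset_closure ⟨Matrix.single i i a, ?_⟩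
    rw [star_stdBasisMatrix, Matrix.single_mul_single_same]
  | zero => rw [Matrix.single_zero]; exact zero_mem _
  | add x y _ _ hx hy => rw [Matrix.single_add]; exact add_mem hx hy

lemma offdiag_piece {k : ℕ} (hk : 1 ≤ k) (i j : Fin k) (n : ℕ)
    {m : MonoidAlgebra ℝ G} (hm : m ∈ (Iaug G) ^ (2 * n)) :
    ∃ c d : MonoidAlgebra ℝ G, star c = c ∧ star d = d ∧
      c ∈ (Iaug G) ^ (2 * n) ∧ d ∈ (Iaug G) ^ (2 * n) ∧
      Matrix.single i j m + Matrix.single j i (star m) +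
        Matrix.single i i c + Matrix.single j j d ∈
        SOS (Matrix (Fin k) (Fin k) (MonoidAlgebra ℝ G)) := by
  rw [two_mul, pow_add] at hm
  rw [show (2 * n) = n + n from two_mul n]
  refine Submodule.mul_induction_on hm ?_ ?_
  · intro p hp q hq
    refine ⟨p * star p, star q * q, by rw [star_mul, star_star], by rw [star_mul, star_star],
      by rw [pow_add]; exact Submodule.mul_mem_mul hp (star_mem_Ipow hp),
      by rw [pow_add]; exact Submodule.mul_mem_mul (star_mem_Ipow hq) hq, ?_⟩
    set z0 : Fin k := ⟨0, hk⟩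
    refine AddSubmonoid.subset_closure
      ⟨Matrix.single z0 i (star p) + Matrix.single z0 j q, ?_⟩
    rw [star_add, star_stdBasisMatrix, star_stdBasisMatrix, star_star, add_mul, mul_add,
      mul_add, Matrix.single_mul_single_same, Matrix.single_mul_single_same,
      Matrix.single_mul_single_same, Matrix.single_mul_single_same, star_mul]
    abel
  · rintro x y ⟨c1, d1, hc1, hd1, hc1m, hd1m, h1⟩ ⟨c2, d2, hc2, hd2, hc2m, hd2m, h2⟩
    refine ⟨c1 + c2, d1 + d2, by rw [star_add, hc1, hc2], by rw [star_add, hd1, hd2],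
      add_mem hc1m hc2m, add_mem hd1m hd2m, ?_⟩
    have heq : Matrix.single i j (x + y) + Matrix.single j i (star (x + y)) +
        Matrix.single i i (c1 + c2) + Matrix.single j j (d1 + d2) =
        (Matrix.single i j x + Matrix.single j i (star x) +
          Matrix.single i i c1 + Matrix.single j j d1) +
        (Matrix.single i j y + Matrix.single j i (star y) +
          Matrix.single i i c2 + Matrix.single j j d2) := by
      rw [star_add, Matrix.single_add, Matrix.single_add,
        Matrix.single_add, Matrix.single_add]
      abel
    rw [heq]
    exact add_mem h1 h2

/-- If `u` is an order unit in `I^{2n}[G]` then `diag_k(u)` is an order unit in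
`M_{k×k}(I^{2n}[G])`. -/
theorem diagonal_order_unit (G : Type) [Group G] (S : Finset G)
    (hS : Subgroup.closure (S : Set G) = ⊤) (hsym : ∀ s ∈ S, s⁻¹ ∈ S)
    (n : ℕ) (hn : 1 ≤ n) (u : MonoidAlgebra ℝ G) (hu : u ∈ (Iaug G) ^ (2 * n))
    (hord : ∀ v ∈ (Iaug G) ^ (2 * n), star v = v →
      ∃ R : ℝ, 0 ≤ R ∧ v + R • u ∈ (Iaug G) ^ (2 * n) ∧
        v + R • u ∈ SOS (MonoidAlgebra ℝ G))
    (k : ℕ) (hk : 1 ≤ k) (M : Matrix (Fin k) (Fin k) (MonoidAlgebra ℝ G))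
    (hM : ∀ i j, M i j ∈ (Iaug G) ^ (2 * n)) (hherm : star M = M) :
    ∃ R : ℝ, 0 ≤ R ∧
      (∀ i j, (M + R • (Matrix.diagonal fun _ => u : Matrix (Fin k) (Fin k) (MonoidAlgebra ℝ G))) i j ∈ (Iaug G) ^ (2 * n)) ∧
      (M + R • (Matrix.diagonal fun _ => u : Matrix (Fin k) (Fin k) (MonoidAlgebra ℝ G))) ∈
        SOS (Matrix (Fin k) (Fin k) (MonoidAlgebra ℝ G)) := by
  classical
  have hMst : ∀ i j, star (M j i) = M i j := by
    intro i j
    conv_rhs => rw [← hherm]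
    rfl
  set od : Finset (Fin k × Fin k) := (Finset.univ : Finset (Fin k)).offDiag with hod
  set mm : Fin k × Fin k → MonoidAlgebra ℝ G := fun p => (2 : ℝ)⁻¹ • M p.1 p.2 with hmm
  have hmmI : ∀ p : Fin k × Fin k, mm p ∈ (Iaug G) ^ (2 * n) :=
    fun p => Submodule.smul_mem _ _ (hM p.1 p.2)
  have hpiece := fun p : Fin k × Fin k => offdiag_piece hk p.1 p.2 n (hmmI p)
  choose c d hc1 hd1 hc2 hd2 hQ using hpiece
  set s : Fin k → MonoidAlgebra ℝ G := fun i =>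
    ∑ p ∈ od, ((if p.1 = i then c p else 0) + (if p.2 = i then d p else 0)) with hs
  have hsI : ∀ i, s i ∈ (Iaug G) ^ (2 * n) := by
    intro i
    refine Submodule.sum_mem _ (fun p _ => add_mem ?_ ?_) <;>
      · split
        · first | exact hc2 p | exact hd2 p
        · exact zero_mem _
  have hsStar : ∀ i, star (s i) = s i := by
    intro i
    rw [hs]
    rw [star_sum]
    refine Finset.sum_congr rfl (fun p _ => ?_)
    simp only [star_add, apply_ite star, star_zero, hc1, hd1]
  have hwI : ∀ i, M i i - s i ∈ (Iaug G) ^ (2 * n) :=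
    fun i => sub_mem (hM i i) (hsI i)
  have hwStar : ∀ i, star (M i i - s i) = M i i - s i := by
    intro i
    rw [star_sub, hsStar, hMst]
  -- a common R working for all diagonal entries
  obtain ⟨R, hR0, hRsos⟩ : ∃ R : ℝ, 0 ≤ R ∧
      ∀ i, (M i i - s i) + R • u ∈ SOS (MonoidAlgebra ℝ G) := by
    by_cases hus : star u = u
    · have hu_sos : u ∈ SOS (MonoidAlgebra ℝ G) := by
        obtain ⟨R, hR0, _, hsos⟩ := hord u hu hus
        have h2 : u + R • u = (1 + R) • u := by rw [add_smul, one_smul]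
        have h3 : u = (1 + R)⁻¹ • ((1 + R) • u) := by
          rw [smul_smul, inv_mul_cancel₀ (by positivity), one_smul]
        rw [h3]
        exact SOS_smul_mem (by positivity) (h2 ▸ hsos)
      have h4 := fun i => hord (M i i - s i) (hwI i) (hwStar i)
      choose Ri hRi0 _ hRisos using h4
      refine ⟨∑ i, Ri i, Finset.sum_nonneg (fun i _ => hRi0 i), fun i => ?_⟩
      have h5 : (M i i - s i) + (∑ j, Ri j) • u =
          ((M i i - s i) + Ri i • u) + ((∑ j, Ri j) - Ri i) • u := by
        rw [sub_smul]; abel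
      rw [h5]
      refine add_mem (hRisos i) (SOS_smul_mem ?_ hu_sos)
      have := Finset.single_le_sum (f := Ri) (fun j _ => hRi0 j) (Finset.mem_univ i)
      linarith
    · refine ⟨0, le_refl _, fun i => ?_⟩
      obtain ⟨Ri, hRi0, _, hsos⟩ := hord (M i i - s i) (hwI i) (hwStar i)
      have hst := SOS_star_eq hsos
      rw [star_add, hwStar, star_smul, star_trivial] at hst
      have h6 : Ri • (star u) = Ri • u := by
        have := add_left_cancel hst
        exact this
      have h7 : Ri = 0 := by
        rcases smul_eq_zero.mp (by rw [smul_sub, h6, sub_self] : Ri • (star u - u) = 0) with h | h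
        · exact h
        · exact absurd (by rwa [sub_eq_zero] at h) hus
      rw [h7] at hsos
      rw [zero_smul] at hsos ⊢
      exact hsos
  refine ⟨R, hR0, fun i j => ?_, ?_⟩
  · show M i j + R • (Matrix.diagonal fun _ => u) i j ∈ _
    rw [Matrix.diagonal_apply]
    refine add_mem (hM i j) ?_
    split
    · exact Submodule.smul_mem _ _ hu
    · rw [smul_zero]; exact zero_mem _
  · have key : M + R • (Matrix.diagonal fun _ => u : Matrix (Fin k) (Fin k) (MonoidAlgebra ℝ G)) =
        (∑ p ∈ od, (Matrix.single p.1 p.2 (mm p) +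
          Matrix.single p.2 p.1 (star (mm p)) +
          Matrix.single p.1 p.1 (c p) + Matrix.single p.2 p.2 (d p))) +
        ∑ i, Matrix.single i i ((M i i - s i) + R • u) := by
      ext r t
      simp only [Matrix.add_apply, Matrix.smul_apply, Matrix.diagonal_apply,
        Matrix.sum_apply, Matrix.single, Matrix.of_apply]
      by_cases hrt : r = t
      · subst hrt
        rw [if_pos rfl]
        have e2 : ∑ i, (if i = r ∧ i = r then (M i i - s i) + R • u else 0) =
            (M r r - s r) + R • u := by
          simp only [and_self]
          rw [Finset.sum_ite_eq' Finset.univ r]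
          rw [if_pos (Finset.mem_univ r)]
        have e1 : ∑ p ∈ od, ((if p.1 = r ∧ p.2 = r then mm p else 0) +
            (if p.2 = r ∧ p.1 = r then star (mm p) else 0) +
            (if p.1 = r ∧ p.1 = r then c p else 0) +
            (if p.2 = r ∧ p.2 = r then d p else 0)) = s r := by
          rw [hs]
          refine Finset.sum_congr rfl (fun p hp => ?_)
          have hne : p.1 ≠ p.2 := (Finset.mem_offDiag.mp hp).2.2
          rw [if_neg (show ¬(p.1 = r ∧ p.2 = r) from fun h => hne (h.1.trans h.2.symm)),
            if_neg (show ¬(p.2 = r ∧ p.1 = r) from fun h => hne (h.2.trans h.1.symm)),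
            zero_add, zero_add]
          simp only [and_self]
        rw [e1, e2]
        abel
      · rw [if_neg hrt, smul_zero, add_zero]
        have e2 : ∑ i, (if i = r ∧ i = t then (M i i - s i) + R • u else 0) = 0 :=
          Finset.sum_eq_zero (fun i _ => if_neg (fun h => hrt (h.1.symm.trans h.2)))
        have e1 : ∑ p ∈ od, ((if p.1 = r ∧ p.2 = t then mm p else 0) +
            (if p.2 = r ∧ p.1 = t then star (mm p) else 0) +
            (if p.1 = r ∧ p.1 = t then c p else 0) +
            (if p.2 = r ∧ p.2 = t then d p else 0)) =
            mm (r, t) + star (mm (t, r)) := by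
          have step : ∀ p ∈ od, ((if p.1 = r ∧ p.2 = t then mm p else 0) +
              (if p.2 = r ∧ p.1 = t then star (mm p) else 0) +
              (if p.1 = r ∧ p.1 = t then c p else 0) +
              (if p.2 = r ∧ p.2 = t then d p else 0)) =
              ((if p = (r, t) then mm p else 0) + (if p = (t, r) then star (mm p) else 0)) := by
            intro p _
            rw [if_neg (show ¬(p.1 = r ∧ p.1 = t) from fun h => hrt (h.1.symm.trans h.2)),
              if_neg (show ¬(p.2 = r ∧ p.2 = t) from fun h => hrt (h.1.symm.trans h.2)),
              add_zero, add_zero]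
            congr 1
            · by_cases h : p = (r, t)
              · rw [if_pos (by rw [h]; exact ⟨rfl, rfl⟩), if_pos h]
              · rw [if_neg (fun hc => h (Prod.ext_iff.mpr ⟨hc.1, hc.2⟩)), if_neg h]
            · by_cases h : p = (t, r)
              · rw [if_pos (by rw [h]; exact ⟨rfl, rfl⟩), if_pos h]
              · rw [if_neg (fun hc => h (Prod.ext_iff.mpr ⟨hc.2, hc.1⟩)), if_neg h]
          rw [Finset.sum_congr rfl step, Finset.sum_add_distrib,
            Finset.sum_ite_eq' od (r, t), Finset.sum_ite_eq' od (t, r),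
            if_pos (Finset.mem_offDiag.mpr ⟨Finset.mem_univ _, Finset.mem_univ _, hrt⟩),
            if_pos (Finset.mem_offDiag.mpr ⟨Finset.mem_univ _, Finset.mem_univ _,
              fun h => hrt h.symm⟩)]
        rw [e1, e2, add_zero, hmm]
        simp only
        rw [star_smul, star_trivial, hMst]
        rw [← add_smul]
        norm_num
    rw [key]
    refine add_mem (AddSubmonoid.sum_mem _ (fun p _ => hQ p)) ?_
    exact AddSubmonoid.sum_mem _ (fun i _ => diag_embed_SOS i (hRsos i))
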